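/- arXiv:1603.06020 — 5 statements merged into one kernel-verified Lean document; each statement's English description precedes it below -/
import Mathlib

section
/- Let G be a finite group and x ∈ G. Let f : G → G be the automorphism f(a) = x⁻¹ax and let Y = GAlex(G,f). Then the assignment sending the right translation R_g of Y (for g ∈ G) to g⁻¹xg is a well-defined bijection from inn(Y) = {R_g : g ∈ G} onto the conjugacy class of x in G, and it is a quandle isomorphism, where inn(Y) carries the operation σ*τ = τ∘σ∘τ⁻¹ (composition in Sym(Y)) and the conjugacy class carries the operation a*b = b⁻¹ab. In particular, the conjugation quandle x^G is isomorphic to inn(Y) for some quandle Y. -/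
/-- Let `G` be a finite group, `x ∈ G`, `f(a) = x⁻¹ a x`, and `Y = GAlex(G, f)`, whose
operation is `a * g = f(a g⁻¹) g = x⁻¹ (a g⁻¹) x g`.  Let `S ⊆ Sym(Y)` be the set of right
translations `R_g` of `Y` and `T` the conjugacy class of `x` in `G`.  Then `R_g ↦ g⁻¹ x g`
is a well-defined bijection `Φ : S ≃ T` which is a quandle isomorphism from `S` with
`σ * τ = τ ∘ σ ∘ τ⁻¹` to `T` with `a * b = b⁻¹ a b`; in particular `x^G ≅ inn(Y)`. -/
theorem stmt0 {G : Type*} [Group G] [Finite G] (x : G)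
    (S : Set (Equiv.Perm G))
    (hS : S = {σ : Equiv.Perm G | ∃ g : G, ∀ a : G, σ a = x⁻¹ * (a * g⁻¹) * x * g})
    (T : Set G) (hT : T = {c : G | ∃ g : G, c = g⁻¹ * x * g}) :
    ∃ Φ : S ≃ T,
      (∀ (g : G) (σ : S),
        (∀ a : G, (σ : Equiv.Perm G) a = x⁻¹ * (a * g⁻¹) * x * g) →
          (Φ σ : G) = g⁻¹ * x * g) ∧
      (∀ σ τ : S, ((τ : Equiv.Perm G) * (σ : Equiv.Perm G) * (τ : Equiv.Perm G)⁻¹) ∈ S) ∧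
      (∀ (σ τ : S)
        (h : ((τ : Equiv.Perm G) * (σ : Equiv.Perm G) * (τ : Equiv.Perm G)⁻¹) ∈ S),
        (Φ ⟨_, h⟩ : G) = (Φ τ : G)⁻¹ * (Φ σ : G) * (Φ τ : G)) := by
  subst hS hT
  have hinv : ∀ (τ : Equiv.Perm G) (h : G),
      (∀ a : G, τ a = x⁻¹ * (a * h⁻¹) * x * h) →
      ∀ a : G, τ⁻¹ a = x * a * (h⁻¹ * x * h)⁻¹ := by
    intro τ h hh a
    rw [Equiv.Perm.inv_def, Equiv.symm_apply_eq, hh]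
    group
  refine ⟨{
    toFun := fun σ => ⟨x * (σ : Equiv.Perm G) 1, ?_⟩
    invFun := fun c => ⟨(Equiv.mulLeft x⁻¹).trans (Equiv.mulRight (c : G)), ?_⟩
    left_inv := ?_
    right_inv := ?_ }, ?_, ?_, ?_⟩
  · obtain ⟨g, hg⟩ := σ.2
    exact ⟨g, by rw [hg 1]; group⟩
  · obtain ⟨g, hg⟩ := c.2
    refine ⟨g, fun a => ?_⟩
    simp only [Equiv.trans_apply, Equiv.coe_mulLeft, Equiv.coe_mulRight, hg]
    group
  · rintro ⟨σ, g, hg⟩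
    ext a
    simp only [Equiv.trans_apply, Equiv.coe_mulLeft, Equiv.coe_mulRight, hg a, hg 1]
    group
  · rintro ⟨c, g, hg⟩
    ext
    simp only [Equiv.trans_apply, Equiv.coe_mulLeft, Equiv.coe_mulRight]
    group
  · intro g σ h
    simp only [Equiv.coe_fn_mk, h 1]
    group
  · rintro ⟨σ, g, hg⟩ ⟨τ, h, hh⟩
    refine ⟨g * (h⁻¹ * x * h), fun a => ?_⟩
    simp only [Equiv.Perm.mul_apply, hinv τ h hh, hg, hh]
    group
  · rintro ⟨σ, g, hg⟩ ⟨τ, h, hh⟩ hmem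
    simp only [Equiv.coe_fn_mk, Equiv.Perm.mul_apply, hinv τ h hh, hg, hh]
    group
end

section
/- Let Y be a finite connected quandle, and let X = inn(Y) = {R_y : y ∈ Y} be the image of the inner representation, equipped with the quandle operation σ*τ = τ∘σ∘τ⁻¹ (composition in Sym(Y)). Suppose X is connected and |Y| = 2·|X|. Then inn : Y → X is an abelian extension: there exist a quandle 2-cocycle φ : X × X → ℤ/2ℤ and a quandle isomorphism ν : E(X, ℤ/2ℤ, φ) → Y such that inn(ν(x,a)) = x for all x ∈ X and a ∈ ℤ/2ℤ. -/
/-- A binary operation is a quandle operation: idempotent, right invertible,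
and right self-distributive. -/
def IsQuandle {X : Type*} (op : X → X → X) : Prop :=
  (∀ a, op a a = a) ∧ (∀ b c, ∃! a, op a b = c) ∧
    (∀ a b c, op (op a b) c = op (op a c) (op b c))

/-- A quandle 2-cocycle with values in a (multiplicative) abelian group. -/
def IsCocycle {X A : Type*} [CommGroup A] (op : X → X → X) (φ : X → X → A) : Prop :=
  (∀ x y z, φ x y * (φ x z)⁻¹ * φ (op x y) z * (φ (op x z) (op y z))⁻¹ = 1) ∧
    (∀ x, φ x x = 1)

/-- The operation of the abelian extension `E(X, A, φ)`:
`(x, a) * (y, b) = (x * y, a · φ(x, y))`. -/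
def extOp {X A : Type*} [CommGroup A] (op : X → X → X) (φ : X → X → A) :
    X × A → X × A → X × A :=
  fun p q => (op p.1 q.1, p.2 * φ p.1 q.1)

/-! Every inner automorphism of `Y` maps fibres of `inn` onto fibres of `inn`, so by connectedness
all fibres have the same size, which `|Y| = 2 |X|` forces to be `2`. Swapping the two points of
each fibre gives a fixed-point-free involution `t` with `t y * w = t (y * w)`, while `w * y` only
depends on the fibre of `y`. For a section `s` of `inn`, the product `s x * s y` lies in the fibre
of `s (x * y)`, so it is `t ^ φ(x, y) (s (x * y))` for a unique `φ(x, y) ∈ ℤ/2ℤ`;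
self-distributivity in `Y` then becomes the cocycle identity, and `(x, a) ↦ t ^ a (s x)` is the
isomorphism. -/

open Equiv

theorem Nat.card_eq_card_range_mul_of_ncard_fiber {α β : Type*} [Finite α] (f : α → β) {k : ℕ}
    (hk : ∀ a, {y | f y = f a}.ncard = k) : Nat.card α = Nat.card (Set.range f) * k := by
  have := Fintype.ofFinite (Set.range f)
  have hfiber (x : Set.range f) : Nat.card {y // Set.rangeFactorization f y = x} = k := by
    obtain ⟨_, a, rfl⟩ := x
    rw [← hk a, ← Nat.card_coe_set_eq]
    exact Nat.card_congr (Equiv.subtypeEquivRight fun y => Subtype.ext_iff)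
  rw [← Nat.card_congr (Equiv.sigmaFiberEquiv (Set.rangeFactorization f)), Nat.card_sigma]
  simp [hfiber, Nat.card_eq_fintype_card]

section Quandle

variable {Y : Type*} {op : Y → Y → Y} {R : Y → Perm Y}

theorem IsQuandle.perm_op (hq : IsQuandle op) (hR : ∀ y a, R y a = op a y) (a b : Y) :
    R (op a b) = R b * R a * (R b)⁻¹ := by
  ext x
  obtain ⟨x, rfl⟩ := (R b).surjective x
  rw [Perm.mul_apply, Perm.mul_apply, Perm.inv_def, symm_apply_apply, hR, hR, hR, hR]
  exact (hq.2.2 x a b).symm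

variable (R) in
def fiberPreserving : Subgroup (Perm Y) where
  carrier := {g | ∀ a b, R (g a) = R (g b) ↔ R a = R b}
  one_mem' _ _ := Iff.rfl
  mul_mem' hg hh a b := (hg _ _).trans (hh a b)
  inv_mem' {g} hg a b := by simpa using (hg (g⁻¹ a) (g⁻¹ b)).symm

theorem IsQuandle.closure_range_le_fiberPreserving (hq : IsQuandle op)
    (hR : ∀ y a, R y a = op a y) : Subgroup.closure (Set.range R) ≤ fiberPreserving R := by
  rw [Subgroup.closure_le]
  rintro _ ⟨c, rfl⟩ a b
  simp only [hR, hq.perm_op hR, mul_left_inj, mul_right_inj]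

theorem image_fiber_of_mem_fiberPreserving {g : Perm Y} (hg : g ∈ fiberPreserving R) (a : Y) :
    g '' {y | R y = R a} = {y | R y = R (g a)} := by
  ext y
  obtain ⟨y, rfl⟩ := g.surjective y
  simp [hg y a]

theorem IsQuandle.ncard_fiber_eq (hq : IsQuandle op) (hR : ∀ y a, R y a = op a y)
    (hconn : ∀ s t : Y, ∃ g ∈ Subgroup.closure (Set.range R), g s = t) (a b : Y) :
    {y | R y = R a}.ncard = {y | R y = R b}.ncard := by
  obtain ⟨g, hg, rfl⟩ := hconn a b
  rw [← image_fiber_of_mem_fiberPreserving (hq.closure_range_le_fiberPreserving hR hg),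
    Set.ncard_image_of_injective _ g.injective]

end Quandle

theorem exists_fiber_partner_of_ncard_eq_two {Y β : Type*} (f : Y → β) (a : Y)
    (h : {y | f y = f a}.ncard = 2) :
    ∃ b, b ≠ a ∧ f b = f a ∧ ∀ y, f y = f a → y = a ∨ y = b := by
  have hone : ({y | f y = f a} \ {a}).ncard = 1 := by
    rw [Set.ncard_sdiff_singleton_of_mem (s := {y | f y = f a}) rfl, h]
  obtain ⟨b, hb⟩ := Set.ncard_eq_one.mp hone
  have hmem (y) : f y = f a ∧ y ≠ a ↔ y = b := by
    simpa [Set.ext_iff] using (Set.ext_iff.mp hb y)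
  refine ⟨b, ((hmem b).mpr rfl).2, ((hmem b).mpr rfl).1, fun y hy => ?_⟩
  by_cases hya : y = a
  · exact .inl hya
  · exact .inr ((hmem y).mp ⟨hy, hya⟩)

section FiberSwap

variable {Y β : Type*} {f : Y → β} {t : Y → Y}

variable (f t) in
structure IsFiberSwap : Prop where
  ne : ∀ a, t a ≠ a
  apply_eq : ∀ a, f (t a) = f a
  eq_or_eq : ∀ a y, f y = f a → y = a ∨ y = t a

variable (t) in
def swapBy (a : Multiplicative (ZMod 2)) (y : Y) : Y :=
  if a = 1 then y else t y

theorem Multiplicative.zmod_two_cases (a : Multiplicative (ZMod 2)) :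
    a = 1 ∨ a = .ofAdd 1 := by
  revert a; decide

@[simp] theorem swapBy_one (y : Y) : swapBy t 1 y = y := if_pos rfl

@[simp] theorem swapBy_ofAdd_one (y : Y) : swapBy t (.ofAdd 1) y = t y := if_neg (by decide)

namespace IsFiberSwap

theorem involutive (h : IsFiberSwap f t) (a : Y) : t (t a) = a :=
  ((h.eq_or_eq (t a) a (h.apply_eq a).symm).resolve_left (h.ne a).symm).symm

theorem swapBy_swapBy (h : IsFiberSwap f t) (a b : Multiplicative (ZMod 2)) (y : Y) :
    swapBy t a (swapBy t b y) = swapBy t (a * b) y := by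
  rcases Multiplicative.zmod_two_cases a with rfl | rfl <;>
    rcases Multiplicative.zmod_two_cases b with rfl | rfl <;>
    simp [h.involutive, ← ofAdd_add, show (1 + 1 : ZMod 2) = 0 from rfl]

theorem swapBy_left_injective (h : IsFiberSwap f t) (y : Y) :
    Function.Injective fun a => swapBy t a y := by
  intro a b hab
  rcases Multiplicative.zmod_two_cases a with rfl | rfl <;>
    rcases Multiplicative.zmod_two_cases b with rfl | rfl <;>
    simp_all [(h.ne y).symm, h.ne y]

theorem apply_swapBy (h : IsFiberSwap f t) (a : Multiplicative (ZMod 2)) (y : Y) :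
    f (swapBy t a y) = f y := by
  rcases Multiplicative.zmod_two_cases a with rfl | rfl <;> simp [h.apply_eq]

theorem exists_swapBy_of_apply_eq (h : IsFiberSwap f t) {y z : Y} (hyz : f y = f z) :
    ∃ a, swapBy t a z = y := by
  rcases h.eq_or_eq z y hyz with rfl | rfl
  exacts [⟨1, swapBy_one y⟩, ⟨.ofAdd 1, swapBy_ofAdd_one z⟩]

end IsFiberSwap

end FiberSwap

section Extension

variable {Y : Type*} {op : Y → Y → Y} {R : Y → Perm Y} {t : Y → Y}

theorem op_eq_of_perm_eq (hR : ∀ y a, R y a = op a y) (w : Y) {y z : Y} (h : R y = R z) :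
    op w y = op w z := by
  rw [← hR, ← hR, h]

theorem IsQuandle.op_swapBy (hq : IsQuandle op) (hR : ∀ y a, R y a = op a y)
    (h : IsFiberSwap R t) (a : Multiplicative (ZMod 2)) (z w : Y) :
    op (swapBy t a z) w = swapBy t a (op z w) := by
  rcases Multiplicative.zmod_two_cases a with rfl | rfl
  · simp
  have hne : op (t z) w ≠ op z w := fun heq =>
    h.ne z ((R w).injective (by rwa [hR, hR]))
  have hfib : R (op (t z) w) = R (op z w) := by
    rw [hq.perm_op hR, hq.perm_op hR, h.apply_eq]
  simpa using (h.eq_or_eq _ _ hfib).resolve_left hne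

theorem IsFiberSwap.perm_swapBy_rangeSplitting (h : IsFiberSwap R t)
    (x : Set.range R) (a : Multiplicative (ZMod 2)) :
    R (swapBy t a (Set.rangeSplitting R x)) = x := by
  rw [h.apply_swapBy, Set.apply_rangeSplitting R]

theorem IsFiberSwap.bijective_swapBy_rangeSplitting (h : IsFiberSwap R t) :
    Function.Bijective fun p : Set.range R × Multiplicative (ZMod 2) =>
      swapBy t p.2 (Set.rangeSplitting R p.1) := by
  constructor
  · rintro ⟨x, a⟩ ⟨y, b⟩ hab
    obtain rfl : x = y := Subtype.ext <| by
      simpa [h.perm_swapBy_rangeSplitting] using congrArg R hab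
    exact Prod.ext rfl (h.swapBy_left_injective _ hab)
  · intro y
    obtain ⟨a, ha⟩ :=
      h.exists_swapBy_of_apply_eq (Set.apply_rangeSplitting R ⟨R y, y, rfl⟩).symm
    exact ⟨(⟨R y, y, rfl⟩, a), ha⟩

variable (opX : Set.range R → Set.range R → Set.range R)
  (hopX : ∀ σ τ : Set.range R,
    (opX σ τ : Perm Y) = (τ : Perm Y) * (σ : Perm Y) * (τ : Perm Y)⁻¹)
include hopX

theorem opX_self (x : Set.range R) : opX x x = x :=
  Subtype.ext <| by rw [hopX]; group

theorem opX_opX_right (x y z : Set.range R) :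
    opX (opX x y) z = opX (opX x z) (opX y z) :=
  Subtype.ext <| by simp only [hopX]; group

theorem perm_op_rangeSplitting (hq : IsQuandle op) (hR : ∀ y a, R y a = op a y)
    (x y : Set.range R) :
    R (op (Set.rangeSplitting R x) (Set.rangeSplitting R y)) =
      R (Set.rangeSplitting R (opX x y)) := by
  simp only [hq.perm_op hR, Set.apply_rangeSplitting, hopX]

theorem IsQuandle.isCocycle_of_op_rangeSplitting (hq : IsQuandle op)
    (hR : ∀ y a, R y a = op a y) (h : IsFiberSwap R t)
    (φ : Set.range R → Set.range R → Multiplicative (ZMod 2))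
    (hφ : ∀ x y, swapBy t (φ x y) (Set.rangeSplitting R (opX x y)) =
      op (Set.rangeSplitting R x) (Set.rangeSplitting R y)) :
    IsCocycle opX φ := by
  set s := Set.rangeSplitting R
  constructor
  · intro x y z
    have key : φ x y * φ (opX x y) z = φ x z * φ (opX x z) (opX y z) := by
      apply h.swapBy_left_injective (s (opX (opX x y) z))
      calc swapBy t (φ x y * φ (opX x y) z) (s (opX (opX x y) z))
          = op (op (s x) (s y)) (s z) := by
            rw [← hφ x y, hq.op_swapBy hR h, ← hφ, h.swapBy_swapBy, mul_comm]
        _ = op (op (s x) (s z)) (op (s y) (s z)) := hq.2.2 _ _ _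
        _ = swapBy t (φ x z * φ (opX x z) (opX y z)) (s (opX (opX x y) z)) := by
            rw [op_eq_of_perm_eq hR _ (perm_op_rangeSplitting opX hopX hq hR y z), ← hφ x z,
              hq.op_swapBy hR h, ← hφ, h.swapBy_swapBy, mul_comm, ← opX_opX_right opX hopX]
    calc φ x y * (φ x z)⁻¹ * φ (opX x y) z * (φ (opX x z) (opX y z))⁻¹
        = φ x y * φ (opX x y) z * (φ x z * φ (opX x z) (opX y z))⁻¹ := by
          rw [mul_inv]; ac_rfl
      _ = 1 := by rw [key, mul_inv_cancel]
  · intro x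
    exact h.swapBy_left_injective (s x) (by simpa [hq.1, opX_self opX hopX] using hφ x x)

theorem IsQuandle.exists_isCocycle_equiv_of_isFiberSwap (hq : IsQuandle op)
    (hR : ∀ y a, R y a = op a y) (h : IsFiberSwap R t) :
    ∃ φ : Set.range R → Set.range R → Multiplicative (ZMod 2),
      IsCocycle opX φ ∧
      ∃ ν : Set.range R × Multiplicative (ZMod 2) ≃ Y,
        (∀ p q, ν (extOp opX φ p q) = op (ν p) (ν q)) ∧
        ∀ x a, R (ν (x, a)) = (x : Perm Y) := by
  choose φ hφ using fun x y =>
    h.exists_swapBy_of_apply_eq (perm_op_rangeSplitting opX hopX hq hR x y)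
  refine ⟨φ, hq.isCocycle_of_op_rangeSplitting opX hopX hR h φ hφ,
    .ofBijective _ h.bijective_swapBy_rangeSplitting, ?_, h.perm_swapBy_rangeSplitting⟩
  rintro ⟨x, a⟩ ⟨y, b⟩
  simp only [Equiv.ofBijective_apply, extOp]
  rw [hq.op_swapBy hR h, op_eq_of_perm_eq hR _ (h.apply_swapBy b _), ← hφ, h.swapBy_swapBy]

end Extension

theorem stmt6_general {Y : Type*} [Finite Y] (op : Y → Y → Y) (hq : IsQuandle op)
    (R : Y → Equiv.Perm Y) (hR : ∀ y a : Y, R y a = op a y)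
    (hconnY : ∀ s t : Y, ∃ g ∈ Subgroup.closure (Set.range R), g s = t)
    (opX : Set.range R → Set.range R → Set.range R)
    (hopX : ∀ σ τ : Set.range R,
      (opX σ τ : Equiv.Perm Y) = (τ : Equiv.Perm Y) * (σ : Equiv.Perm Y) * (τ : Equiv.Perm Y)⁻¹)
    (hcard : Nat.card Y = 2 * Nat.card (Set.range R)) :
    ∃ φ : Set.range R → Set.range R → Multiplicative (ZMod 2),
      IsCocycle opX φ ∧
      ∃ ν : ↥(Set.range R) × Multiplicative (ZMod 2) ≃ Y,
        (∀ p q : ↥(Set.range R) × Multiplicative (ZMod 2),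
          ν (extOp opX φ p q) = op (ν p) (ν q)) ∧
        ∀ (x : Set.range R) (a : Multiplicative (ZMod 2)),
          R (ν (x, a)) = (x : Equiv.Perm Y) := by
  have hfiber (a : Y) : {y | R y = R a}.ncard = 2 := by
    have hsplit := Nat.card_eq_card_range_mul_of_ncard_fiber R (hq.ncard_fiber_eq hR hconnY · a)
    have : Nonempty (Set.range R) := ⟨⟨R a, a, rfl⟩⟩
    rw [hcard, mul_comm] at hsplit
    exact (Nat.eq_of_mul_eq_mul_left Nat.card_pos hsplit).symm
  choose t ht using fun a => exists_fiber_partner_of_ncard_eq_two R a (hfiber a)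
  exact hq.exists_isCocycle_equiv_of_isFiberSwap opX hopX hR
    ⟨fun a => (ht a).1, fun a => (ht a).2.1, fun a => (ht a).2.2⟩

/-- Let `Y` be a finite connected quandle and `X = inn(Y) = {R_y : y ∈ Y} ⊆ Sym(Y)`,
with the quandle operation `σ * τ = τ ∘ σ ∘ τ⁻¹`.  If `X` is connected and
`|Y| = 2 |X|`, then `inn : Y → X` is an abelian extension: there are a 2-cocycle
`φ : X × X → ℤ/2ℤ` and a quandle isomorphism `ν : E(X, ℤ/2ℤ, φ) → Y` with
`inn(ν(x, a)) = x` for all `x, a`. -/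
theorem stmt6 {Y : Type*} [Finite Y] (op : Y → Y → Y) (hq : IsQuandle op)
    (R : Y → Equiv.Perm Y) (hR : ∀ y a : Y, R y a = op a y)
    (hconnY : ∀ s t : Y, ∃ g ∈ Subgroup.closure (Set.range R), g s = t)
    (opX : Set.range R → Set.range R → Set.range R)
    (hopX : ∀ σ τ : Set.range R,
      (opX σ τ : Equiv.Perm Y) = (τ : Equiv.Perm Y) * (σ : Equiv.Perm Y) * (τ : Equiv.Perm Y)⁻¹)
    (hconnX : ∀ s t : Set.range R, Relation.EqvGen (fun a c => ∃ b, c = opX a b) s t)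
    (hcard : Nat.card Y = 2 * Nat.card (Set.range R)) :
    ∃ φ : Set.range R → Set.range R → Multiplicative (ZMod 2),
      IsCocycle opX φ ∧
      ∃ ν : ↥(Set.range R) × Multiplicative (ZMod 2) ≃ Y,
        (∀ p q : ↥(Set.range R) × Multiplicative (ZMod 2),
          ν (extOp opX φ p q) = op (ν p) (ν q)) ∧
        ∀ (x : Set.range R) (a : Multiplicative (ZMod 2)),
          R (ν (x, a)) = (x : Equiv.Perm Y) :=
  stmt6_general op hq R hR hconnY opX hopX hcard
end

section
/- Let X be a finite quandle, A a finite abelian group, φ : X × X → A a quandle 2-cocycle, and E = E(X,A,φ). Let β be any element of Inn(E), the subgroup of Sym(E) generated by the right translations of E. If β fixes some element (x,a) ∈ E (i.e., β(x,a) = (x,a)), then β fixes every element of the fiber {x} × A: β(x,b) = (x,b) for all b ∈ A. -/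
/-!
Right translations of `E(X, A, φ)` multiply the `A`-coordinate on the right by a cocycle
value, so they commute with the shifts `(y, b) ↦ (y, b · c)` because `A` is abelian. Hence
all of `Inn(E)` centralizes these shifts, and a permutation centralizing them that fixes
`(x, a)` also fixes every shift `(x, a · a⁻¹b) = (x, b)`.
-/

section FiberShift

variable {X A : Type*} [CommGroup A]

def fiberShift (c : A) : Equiv.Perm (X × A) :=
  Equiv.prodCongr (Equiv.refl X) (Equiv.mulRight c)

@[simp]
lemma fiberShift_apply (c : A) (p : X × A) : fiberShift c p = (p.1, p.2 * c) := rfl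

lemma extOp_fiberShift (op : X → X → X) (φ : X → X → A) (c : A) (u e : X × A) :
    extOp op φ (fiberShift c u) e = fiberShift c (extOp op φ u e) := by
  simp [extOp, mul_right_comm]

lemma closure_le_centralizer_fiberShift (op : X → X → X) (φ : X → X → A)
    (R : X × A → Equiv.Perm (X × A)) (hR : ∀ e u : X × A, R e u = extOp op φ u e) :
    Subgroup.closure (Set.range R) ≤ Subgroup.centralizer (Set.range fiberShift) := by
  rw [Subgroup.closure_le]
  rintro _ ⟨e, rfl⟩
  rw [SetLike.mem_coe, Subgroup.mem_centralizer_iff]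
  rintro _ ⟨c, rfl⟩
  ext1 u
  simp only [Equiv.Perm.mul_apply, hR, extOp_fiberShift]

lemma apply_eq_self_of_mem_centralizer_fiberShift {σ : Equiv.Perm (X × A)}
    (hσ : σ ∈ Subgroup.centralizer (Set.range fiberShift)) {x : X} {a : A}
    (hfix : σ (x, a) = (x, a)) (b : A) : σ (x, b) = (x, b) := by
  have hcomm := Subgroup.mem_centralizer_iff.mp hσ (fiberShift (a⁻¹ * b)) ⟨_, rfl⟩
  calc σ (x, b) = σ (fiberShift (a⁻¹ * b) (x, a)) := by simp
    _ = fiberShift (a⁻¹ * b) (σ (x, a)) := (congrArg (· (x, a)) hcomm).symm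
    _ = (x, b) := by simp [hfix]

end FiberShift

theorem stmt7_general {X A : Type*} [CommGroup A]
    (op : X → X → X) (φ : X → X → A)
    (R : X × A → Equiv.Perm (X × A)) (hR : ∀ e u : X × A, R e u = extOp op φ u e)
    (β : Equiv.Perm (X × A)) (hβ : β ∈ Subgroup.closure (Set.range R))
    (x : X) (a : A) (hfix : β (x, a) = (x, a)) :
    ∀ b : A, β (x, b) = (x, b) :=
  apply_eq_self_of_mem_centralizer_fiberShift
    (closure_le_centralizer_fiberShift op φ R hR hβ) hfix

/-- Let `X` be a finite quandle, `A` a finite abelian group, `φ` a 2-cocycle and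
`E = E(X, A, φ)`.  If `β ∈ Inn(E)` (the subgroup of `Sym(E)` generated by the right
translations `R_e`) fixes some `(x, a) ∈ E`, then `β` fixes the whole fiber `{x} × A`. -/
theorem stmt7 {X A : Type*} [Finite X] [CommGroup A] [Finite A]
    (op : X → X → X) (hq : IsQuandle op) (φ : X → X → A) (hφ : IsCocycle op φ)
    (R : X × A → Equiv.Perm (X × A)) (hR : ∀ e u : X × A, R e u = extOp op φ u e)
    (β : Equiv.Perm (X × A)) (hβ : β ∈ Subgroup.closure (Set.range R))
    (x : X) (a : A) (hfix : β (x, a) = (x, a)) :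
    ∀ b : A, β (x, b) = (x, b) :=
  stmt7_general op φ R hR β hβ x a hfix
end

section
/- Let X be a faithful quandle, A an abelian group, φ : X × X → A a quandle 2-cocycle, and E = E(X,A,φ). Then for (x,a), (y,b) ∈ E, the right translations R_{(x,a)} and R_{(y,b)} of E are equal (i.e., e*(x,a) = e*(y,b) for all e ∈ E) if and only if x = y. -/
/-- Let `X` be a faithful quandle, `φ` a 2-cocycle with values in an abelian group `A`,
and `E = E(X, A, φ)`.  The right translations `R_{(x,a)}` and `R_{(y,b)}` of `E` are
equal iff `x = y`. -/
theorem stmt10 {X A : Type*} [CommGroup A] (op : X → X → X) (hq : IsQuandle op)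
    (hfaith : ∀ a b : X, (∀ z : X, op z a = op z b) → a = b)
    (φ : X → X → A) (hφ : IsCocycle op φ) (x y : X) (a b : A) :
    (∀ e : X × A, extOp op φ e (x, a) = extOp op φ e (y, b)) ↔ x = y := by
  constructor
  · intro h
    exact hfaith x y fun z => congrArg Prod.fst (h (z, 1))
  · rintro rfl
    intro e
    rfl
end

section
/- Let X be a nonempty finite faithful quandle, A a finite abelian group, φ : X × X → A a quandle 2-cocycle, and C a proper nontrivial subgroup of A with quotient map q : A → A/C. Let π_C : E(X,A,φ) → E(X,A/C,q∘φ) be the covering (x,a) ↦ (x,q(a)) and let inn : E(X,A,φ) → Sym(E(X,A,φ)), e ↦ R_e, be the inner representation. Then π_C is not the inner representation up to identification of the codomains: there is no bijection h from E(X,A/C,q∘φ) onto the image {R_e : e ∈ E(X,A,φ)} such that h(π_C(e)) = R_e for all e ∈ E(X,A,φ). -/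
/-- Let `X` be a nonempty finite faithful quandle, `A` a finite abelian group, `φ` a
2-cocycle, and `C` a proper nontrivial subgroup of `A`.  Then the covering
`π_C : E(X, A, φ) → E(X, A ⧸ C, q ∘ φ)`, `(x, a) ↦ (x, q a)`, is not the inner
representation up to identification of the codomains: there is no bijection `h` from
`E(X, A ⧸ C)` onto the image `{R_e : e ∈ E(X, A, φ)}` with `h(π_C e) = R_e` for all
`e`. -/
theorem stmt15 {X A : Type*} [Finite X] [Nonempty X] [CommGroup A] [Finite A]
    (op : X → X → X) (hq : IsQuandle op)
    (hfaith : ∀ a b : X, (∀ z : X, op z a = op z b) → a = b)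
    (φ : X → X → A) (hφ : IsCocycle op φ)
    (C : Subgroup A) (hCbot : C ≠ ⊥) (hCtop : C ≠ ⊤)
    (R : X × A → Equiv.Perm (X × A)) (hR : ∀ e u : X × A, R e u = extOp op φ u e) :
    ¬ ∃ h : X × (A ⧸ C) → Equiv.Perm (X × A),
        Function.Injective h ∧ Set.range h = Set.range R ∧
        ∀ e : X × A, h (e.1, QuotientGroup.mk' C e.2) = R e := by
  rintro ⟨h, hinj, -, hcomp⟩
  apply hCtop
  ext a
  simp only [Subgroup.mem_top, iff_true]
  obtain ⟨x⟩ := ‹Nonempty X›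
  have hRa : R (x, a) = R (x, 1) := Equiv.ext fun u => by rw [hR, hR]; rfl
  have := hinj (a₁ := (x, QuotientGroup.mk' C a)) (a₂ := (x, QuotientGroup.mk' C 1)) (by
    have h1 := hcomp (x, a)
    have h2 := hcomp (x, 1)
    simp only at h1 h2
    rw [h1, h2, hRa])
  have h3 : (QuotientGroup.mk' C a : A ⧸ C) = QuotientGroup.mk' C 1 := congrArg Prod.snd this
  rw [QuotientGroup.mk'_apply, QuotientGroup.mk'_apply, QuotientGroup.eq] at h3
  simpa using h3
end
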